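/- For each n ∈ {5, 6, 8}, the graph S_n admits a strong edge-coloring using 5 colors; that is, χ'_s(S_n) ≤ 5. -/

import Mathlib

open SimpleGraph

/-- Two distinct edges of `G` are *in conflict* (at distance at most two) if they share an
endpoint or are both incident to a common third edge of `G`. -/
def EdgeConflict {V : Type*} (G : SimpleGraph V) (e₁ e₂ : Sym2 V) : Prop :=
  e₁ ∈ G.edgeSet ∧ e₂ ∈ G.edgeSet ∧ e₁ ≠ e₂ ∧
    ((∃ v, v ∈ e₁ ∧ v ∈ e₂) ∨
      ∃ e₃ ∈ G.edgeSet, e₃ ≠ e₁ ∧ e₃ ≠ e₂ ∧ (∃ v, v ∈ e₁ ∧ v ∈ e₃) ∧ ∃ w, w ∈ e₂ ∧ w ∈ e₃)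

/-- A strong edge-coloring: edges at distance at most two receive distinct colors. -/
def IsStrongEdgeColoring {V α : Type*} (G : SimpleGraph V) (c : Sym2 V → α) : Prop :=
  ∀ e₁ e₂ : Sym2 V, EdgeConflict G e₁ e₂ → c e₁ ≠ c e₂

/-- The strong chromatic index: the least number of colors in a strong edge-coloring
(`⊤` if no finite strong edge-coloring exists). -/
noncomputable def strongChromaticIndex {V : Type*} (G : SimpleGraph V) : ℕ∞ :=
  sInf {n : ℕ∞ | ∃ k : ℕ, n = (k : ℕ∞) ∧ ∃ c : Sym2 V → Fin k, IsStrongEdgeColoring G c}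

/-- `mad(G) < q`: every subgraph `H` with at least one vertex satisfies `2|E(H)|/|V(H)| < q`. -/
def MadLT {V : Type*} (G : SimpleGraph V) (q : ℚ) : Prop :=
  ∀ H : G.Subgraph, H.verts.Nonempty → 2 * (H.edgeSet.ncard : ℚ) < q * (H.verts.ncard : ℚ)

/-- `mad(G) = q`: the maximum of `2|E(H)|/|V(H)|` over nonempty subgraphs `H` equals `q`. -/
def MadEq {V : Type*} (G : SimpleGraph V) (q : ℚ) : Prop :=
  (∀ H : G.Subgraph, H.verts.Nonempty → 2 * (H.edgeSet.ncard : ℚ) ≤ q * (H.verts.ncard : ℚ)) ∧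
    ∃ H : G.Subgraph, H.verts.Nonempty ∧ 2 * (H.edgeSet.ncard : ℚ) = q * (H.verts.ncard : ℚ)

/-- `G` contains a subgraph isomorphic to `H`. -/
def ContainsCopy {W V : Type*} (H : SimpleGraph W) (G : SimpleGraph V) : Prop :=
  ∃ f : W → V, Function.Injective f ∧ ∀ a b : W, H.Adj a b → G.Adj (f a) (f b)

/-- `Sgraph k` is a `k`-cycle with a pendant edge attached at each vertex. -/
def Sgraph (k : ℕ) [NeZero k] : SimpleGraph (Fin k ⊕ Fin k) :=
  SimpleGraph.fromEdgeSet
    {e | ∃ i : Fin k, e = s(Sum.inl i, Sum.inl (i + 1)) ∨ e = s(Sum.inl i, Sum.inr i)}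

/-- `S₄`: a `4`-cycle `0 1 2 3` with pendant edges at the adjacent vertices `0` and `1`. -/
def S4graph : SimpleGraph (Fin 6) :=
  SimpleGraph.fromEdgeSet {s(0, 1), s(1, 2), s(2, 3), s(3, 0), s(0, 4), s(1, 5)}

/-- `v` is a vertex of the contracted graph `ct(G)`, i.e. `v` does not have degree `1`. -/
def InCt {V : Type*} (G : SimpleGraph V) (v : V) : Prop := (G.neighborSet v).ncard ≠ 1

/-- Adjacency in the contracted graph `ct(G)`. -/
def CtAdj {V : Type*} (G : SimpleGraph V) (u v : V) : Prop :=
  G.Adj u v ∧ InCt G u ∧ InCt G v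

/-- The degree of a vertex in the contracted graph `ct(G)`. -/
noncomputable def ctDeg {V : Type*} (G : SimpleGraph V) (v : V) : ℕ :=
  {u | CtAdj G v u}.ncard

/-- A `2⊥`-vertex: a vertex of `ct(G)` of degree `2` in `ct(G)`. -/
def IsTwoPerp {V : Type*} (G : SimpleGraph V) (v : V) : Prop :=
  InCt G v ∧ ctDeg G v = 2

/-- The set of edges of a path `p` with `n` edges. -/
def pathEdges {V : Type*} (n : ℕ) (p : Fin (n + 1) → V) : Set (Sym2 V) :=
  {e | ∃ i : Fin n, e = s(p i.castSucc, p i.succ)}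

/-- A `t`-caterpillar: two vertices of degree at least `3` in `ct(G)` joined by a path
whose `t` internal vertices are all `2⊥`-vertices. -/
structure IsCaterpillar {V : Type*} (G : SimpleGraph V) (t : ℕ) (p : Fin (t + 2) → V) : Prop where
  inj : Function.Injective p
  adj : ∀ i : Fin (t + 1), G.Adj (p i.castSucc) (p i.succ)
  end₀ : 3 ≤ ctDeg G (p 0)
  end₁ : 3 ≤ ctDeg G (p (Fin.last (t + 1)))
  internal : ∀ i : Fin (t + 2), i ≠ 0 → i ≠ Fin.last (t + 1) → IsTwoPerp G (p i)

/-- A path with `n` edges in the contracted graph `ct(G)` all of whose internal vertices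
are `2⊥`-vertices. -/
structure IsCtPath {V : Type*} (G : SimpleGraph V) (n : ℕ) (p : Fin (n + 1) → V) : Prop where
  inj : Function.Injective p
  adj : ∀ i : Fin n, CtAdj G (p i.castSucc) (p i.succ)
  internal : ∀ i : Fin (n + 1), i ≠ 0 → i ≠ Fin.last n → IsTwoPerp G (p i)

/-- No internal vertex of the path `p` lies on the path `q`. -/
def IntDisjoint {V : Type*} {m n : ℕ} (p : Fin (m + 1) → V) (q : Fin (n + 1) → V) : Prop :=
  ∀ i : Fin (m + 1), i ≠ 0 → i ≠ Fin.last m → ∀ j : Fin (n + 1), p i ≠ q j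

/-- Two paths are internally disjoint. -/
def PDisj {V : Type*} {m n : ℕ} (p : Fin (m + 1) → V) (q : Fin (n + 1) → V) : Prop :=
  IntDisjoint p q ∧ IntDisjoint q p

/-- The configuration `Y(t₁,t₂,t₃)`: a vertex `v` of degree at least `3` in `ct(G)` together
with three internally disjoint paths of lengths `t₁+1`, `t₂+1`, `t₃+1` in `ct(G)` with common
endpoint `v`, all of whose internal vertices are `2⊥`-vertices. -/
structure IsYConfig {V : Type*} (G : SimpleGraph V) (t₁ t₂ t₃ : ℕ) (v : V)
    (p₁ : Fin (t₁ + 2) → V) (p₂ : Fin (t₂ + 2) → V) (p₃ : Fin (t₃ + 2) → V) : Prop where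
  deg : 3 ≤ ctDeg G v
  path₁ : IsCtPath G (t₁ + 1) p₁
  path₂ : IsCtPath G (t₂ + 1) p₂
  path₃ : IsCtPath G (t₃ + 1) p₃
  start₁ : p₁ 0 = v
  start₂ : p₂ 0 = v
  start₃ : p₃ 0 = v
  disj₁₂ : PDisj p₁ p₂
  disj₁₃ : PDisj p₁ p₃
  disj₂₃ : PDisj p₂ p₃

/-- The configuration `H(t₁,t₂;r;s₁,s₂)`: two vertices `v`, `u` of degree `3` in `ct(G)` and
five internally disjoint paths in `ct(G)` whose internal vertices are `2⊥`-vertices: paths of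
lengths `t₁+1`, `t₂+1` with endpoint `v`, a path of length `r+1` joining `v` and `u`, and
paths of lengths `s₁+1`, `s₂+1` with endpoint `u`. -/
structure IsHConfig {V : Type*} (G : SimpleGraph V) (t₁ t₂ r s₁ s₂ : ℕ) (v u : V)
    (p₁ : Fin (t₁ + 2) → V) (p₂ : Fin (t₂ + 2) → V) (q : Fin (r + 2) → V)
    (p₃ : Fin (s₁ + 2) → V) (p₄ : Fin (s₂ + 2) → V) : Prop where
  degv : ctDeg G v = 3
  degu : ctDeg G u = 3
  path₁ : IsCtPath G (t₁ + 1) p₁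
  path₂ : IsCtPath G (t₂ + 1) p₂
  pathq : IsCtPath G (r + 1) q
  path₃ : IsCtPath G (s₁ + 1) p₃
  path₄ : IsCtPath G (s₂ + 1) p₄
  start₁ : p₁ 0 = v
  start₂ : p₂ 0 = v
  startq : q 0 = v
  endq : q (Fin.last (r + 1)) = u
  start₃ : p₃ 0 = u
  start₄ : p₄ 0 = u
  disj₁₂ : PDisj p₁ p₂
  disj₁q : PDisj p₁ q
  disj₁₃ : PDisj p₁ p₃
  disj₁₄ : PDisj p₁ p₄
  disj₂q : PDisj p₂ q
  disj₂₃ : PDisj p₂ p₃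
  disj₂₄ : PDisj p₂ p₄
  disjq₃ : PDisj q p₃
  disjq₄ : PDisj q p₄
  disj₃₄ : PDisj p₃ p₄

/-- The configuration `Φ(t,a₁,a₂,s)`: two vertices `v`, `u` of degree `3` in `ct(G)` and four
internally disjoint paths in `ct(G)` whose internal vertices are `2⊥`-vertices: a path of
length `t+1` with endpoint `v`, paths of lengths `a₁+1` and `a₂+1` joining `v` and `u`, and a
path of length `s+1` with endpoint `u`. -/
structure IsPhiConfig {V : Type*} (G : SimpleGraph V) (t a₁ a₂ s : ℕ) (v u : V)
    (pt : Fin (t + 2) → V) (pa : Fin (a₁ + 2) → V) (pb : Fin (a₂ + 2) → V)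
    (ps : Fin (s + 2) → V) : Prop where
  degv : ctDeg G v = 3
  degu : ctDeg G u = 3
  patht : IsCtPath G (t + 1) pt
  patha : IsCtPath G (a₁ + 1) pa
  pathb : IsCtPath G (a₂ + 1) pb
  paths : IsCtPath G (s + 1) ps
  startt : pt 0 = v
  starta : pa 0 = v
  enda : pa (Fin.last (a₁ + 1)) = u
  startb : pb 0 = v
  endb : pb (Fin.last (a₂ + 1)) = u
  starts : ps 0 = u
  disjtab : PDisj pt pa
  disjtb : PDisj pt pb
  disjts : PDisj pt ps
  disjab : PDisj pa pb
  disjas : PDisj pa ps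
  disjbs : PDisj pb ps

/-- A set `D` of edges of `G` is `k`-reducible: there is `D' ⊆ D` such that any two edges of
`G - D'` at distance at most two in `G` are at distance at most two in `G - D'`, and every
strong `k`-edge-coloring of `G - D'` extends to a strong `k`-edge-coloring of `G`. -/
def IsReducible {V : Type*} (G : SimpleGraph V) (D : Set (Sym2 V)) (k : ℕ) : Prop :=
  ∃ D' ⊆ D,
    (∀ e₁ e₂ : Sym2 V, e₁ ∈ (G.deleteEdges D').edgeSet → e₂ ∈ (G.deleteEdges D').edgeSet →
      EdgeConflict G e₁ e₂ → EdgeConflict (G.deleteEdges D') e₁ e₂) ∧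
    ∀ c : Sym2 V → Fin k, IsStrongEdgeColoring (G.deleteEdges D') c →
      ∃ c' : Sym2 V → Fin k, IsStrongEdgeColoring G c' ∧
        ∀ e ∈ (G.deleteEdges D').edgeSet, c' e = c e

/-- Every configuration `Y(t₁,t₂,t₃)` in `G` is `k`-reducible. -/
def YReducible {V : Type*} (G : SimpleGraph V) (t₁ t₂ t₃ k : ℕ) : Prop :=
  ∀ (v : V) (p₁ : Fin (t₁ + 2) → V) (p₂ : Fin (t₂ + 2) → V) (p₃ : Fin (t₃ + 2) → V),
    IsYConfig G t₁ t₂ t₃ v p₁ p₂ p₃ →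
    IsReducible G (pathEdges (t₁ + 1) p₁ ∪ pathEdges (t₂ + 1) p₂ ∪ pathEdges (t₃ + 1) p₃) k

/-- Every configuration `H(t₁,t₂;r;s₁,s₂)` in `G` is `k`-reducible. -/
def HReducible {V : Type*} (G : SimpleGraph V) (t₁ t₂ r s₁ s₂ k : ℕ) : Prop :=
  ∀ (v u : V) (p₁ : Fin (t₁ + 2) → V) (p₂ : Fin (t₂ + 2) → V) (q : Fin (r + 2) → V)
    (p₃ : Fin (s₁ + 2) → V) (p₄ : Fin (s₂ + 2) → V),
    IsHConfig G t₁ t₂ r s₁ s₂ v u p₁ p₂ q p₃ p₄ →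
    IsReducible G (pathEdges (t₁ + 1) p₁ ∪ pathEdges (t₂ + 1) p₂ ∪ pathEdges (r + 1) q ∪
      pathEdges (s₁ + 1) p₃ ∪ pathEdges (s₂ + 1) p₄) k

/-- Every configuration `Φ(t,a₁,a₂,s)` in `G` is `k`-reducible. -/
def PhiReducible {V : Type*} (G : SimpleGraph V) (t a₁ a₂ s k : ℕ) : Prop :=
  ∀ (v u : V) (pt : Fin (t + 2) → V) (pa : Fin (a₁ + 2) → V) (pb : Fin (a₂ + 2) → V)
    (ps : Fin (s + 2) → V),
    IsPhiConfig G t a₁ a₂ s v u pt pa pb ps →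
    IsReducible G (pathEdges (t + 1) pt ∪ pathEdges (a₁ + 1) pa ∪ pathEdges (a₂ + 1) pb ∪
      pathEdges (s + 1) ps) k

/-- A graph is 2-connected: connected, at least three vertices, and no cut vertex. -/
def TwoConnected {W : Type*} (H : SimpleGraph W) : Prop :=
  H.Connected ∧ 3 ≤ Nat.card W ∧ ∀ w : W, ((H.induce {x | x ≠ w}).Connected)

/-- `χ'_{ℓ,s}(G) ≤ k`: whenever each edge gets a list of at least `k` colors, there is a
strong edge-coloring choosing each edge's color from its list. -/
def StrongListChromaticIndexLE {V : Type*} (G : SimpleGraph V) (k : ℕ) : Prop :=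
  ∀ (C : Type) (L : Sym2 V → Finset C), (∀ e ∈ G.edgeSet, k ≤ (L e).card) →
    ∃ c : Sym2 V → C, (∀ e ∈ G.edgeSet, c e ∈ L e) ∧ IsStrongEdgeColoring G c

/-- The prism: two triangles joined by a perfect matching (`K₃ □ K₂`). -/
def prismGraph : SimpleGraph (Fin 6) :=
  SimpleGraph.fromEdgeSet
    {s(0, 1), s(1, 2), s(0, 2), s(3, 4), s(4, 5), s(3, 5), s(0, 3), s(1, 4), s(2, 5)}

/-- The vertex type of `ex₃(Θ(t₁,t₂,t₃))`: the branch vertices `x`, `y`, the internal vertices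
of the three paths, and one pendant vertex for each internal vertex. -/
def ThetaExV (t : Fin 3 → ℕ) : Type :=
  Fin 2 ⊕ (Σ i : Fin 3, Fin (t i)) ⊕ (Σ i : Fin 3, Fin (t i))

/-- `ex₃(Θ(t₁,t₂,t₃))`: two vertices `x = inl 0`, `y = inl 1` joined by three internally
disjoint paths of lengths `t 0 + 1`, `t 1 + 1`, `t 2 + 1`, with a pendant edge attached at
each internal (degree-2) vertex. -/
def ThetaEx (t : Fin 3 → ℕ) : SimpleGraph (ThetaExV t) :=
  SimpleGraph.fromEdgeSet
    ({e | ∃ i : Fin 3, t i = 0 ∧ e = s(Sum.inl 0, Sum.inl 1)} ∪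
     {e | ∃ (i : Fin 3) (j : Fin (t i)), (j : ℕ) = 0 ∧
        e = s(Sum.inl 0, Sum.inr (Sum.inl ⟨i, j⟩))} ∪
     {e | ∃ (i : Fin 3) (j k : Fin (t i)), (k : ℕ) = (j : ℕ) + 1 ∧
        e = s(Sum.inr (Sum.inl ⟨i, j⟩), Sum.inr (Sum.inl ⟨i, k⟩))} ∪
     {e | ∃ (i : Fin 3) (j : Fin (t i)), (j : ℕ) + 1 = t i ∧
        e = s(Sum.inr (Sum.inl ⟨i, j⟩), Sum.inl 1)} ∪
     {e | ∃ (i : Fin 3) (j : Fin (t i)),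
        e = s(Sum.inr (Sum.inl ⟨i, j⟩), Sum.inr (Sum.inr ⟨i, j⟩))})

/-- The graph of Figure 2: a 4-cycle `0 1 2 3` with the edge `0 1` subdivided by vertex `4`,
and a new vertex `5` adjacent to both `0` and `1`. -/
def houseGraph : SimpleGraph (Fin 6) :=
  SimpleGraph.fromEdgeSet {s(0, 4), s(4, 1), s(1, 2), s(2, 3), s(3, 0), s(0, 5), s(1, 5)}

/-- The graph of Figure 3: vertices `x = 0`, `y = 1` joined by internally disjoint paths
`0 2 1`, `0 3 1`, `0 4 5 1`, together with the path `2 6 7 3`. -/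
def figThreeGraph : SimpleGraph (Fin 8) :=
  SimpleGraph.fromEdgeSet
    {s(0, 2), s(2, 1), s(0, 3), s(3, 1), s(0, 4), s(4, 5), s(5, 1), s(2, 6), s(6, 7), s(7, 3)}


/- Each bound is witnessed by an explicit coloring giving the cycle edge `i (i+1)` the color
`cyc i` and the pendant edge at `i` the color `pend i`. Once the edges of `S_k` are indexed by
`Fin k × Bool`, the strong-coloring condition becomes a finite check on indices. -/

section StrongEdgeColoring

variable {V : Type*} (G : SimpleGraph V)

theorem strongChromaticIndex_le_of_isStrongEdgeColoring {k : ℕ} (c : Sym2 V → Fin k)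
    (hc : IsStrongEdgeColoring G c) : strongChromaticIndex G ≤ k :=
  sInf_le ⟨k, rfl, c, hc⟩

theorem exists_isStrongEdgeColoring_of_injective {ι α : Type*} [Inhabited α] (edge : ι → Sym2 V)
    (hinj : Function.Injective edge) (hrange : G.edgeSet ⊆ Set.range edge) (col : ι → α)
    (hcol : ∀ a b, a ≠ b →
      ((∃ v, v ∈ edge a ∧ v ∈ edge b) ∨
        ∃ d, (∃ v, v ∈ edge a ∧ v ∈ edge d) ∧ ∃ w, w ∈ edge b ∧ w ∈ edge d) →
      col a ≠ col b) :
    ∃ c : Sym2 V → α, IsStrongEdgeColoring G c ∧ ∀ a, c (edge a) = col a := by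
  refine ⟨Function.extend edge col default, ?_, hinj.extend_apply col default⟩
  rintro _ _ ⟨h₁, h₂, hne, hshare⟩
  obtain ⟨a, rfl⟩ := hrange h₁
  obtain ⟨b, rfl⟩ := hrange h₂
  simp only [hinj.extend_apply]
  refine hcol a b (fun hab => hne (congrArg edge hab)) ?_
  rcases hshare with h | ⟨_, h₃, -, -, hv, hw⟩
  · exact Or.inl h
  · obtain ⟨d, rfl⟩ := hrange h₃
    exact Or.inr ⟨d, hv, hw⟩

end StrongEdgeColoring

namespace Sgraph

def edge (k : ℕ) [NeZero k] : Fin k × Bool → Sym2 (Fin k ⊕ Fin k)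
  | (i, false) => s(.inl i, .inl (i + 1))
  | (i, true) => s(.inl i, .inr i)

variable {k : ℕ} [NeZero k]

theorem edgeSet_subset_range_edge : (Sgraph k).edgeSet ⊆ Set.range (edge k) := by
  rw [Sgraph, edgeSet_fromEdgeSet]
  rintro _ ⟨⟨i, rfl | rfl⟩, -⟩
  exacts [⟨(i, false), rfl⟩, ⟨(i, true), rfl⟩]

theorem edge_injective (hk : 3 ≤ k) : Function.Injective (edge k) := by
  rintro ⟨i, _ | _⟩ ⟨j, _ | _⟩ h <;>
    simp only [edge, Sym2.eq, Sym2.rel_iff', Prod.mk.injEq, Prod.swap_prod_mk, Sum.inl.injEq,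
      Sum.inr.injEq, add_left_inj, reduceCtorEq, and_self, and_false, false_and, or_self,
      or_false] at h
  · obtain rfl | ⟨rfl, h⟩ := h
    · rfl
    · rw [add_assoc, add_eq_left, Fin.ext_iff, Fin.val_add, Fin.val_one', Fin.val_zero,
        Nat.one_mod_eq_one.mpr (by omega), Nat.mod_eq_of_lt (by omega)] at h
      omega
  · rw [h]

theorem strongChromaticIndex_le (hk : 3 ≤ k) {m : ℕ} [NeZero m] (cyc pend : Fin k → Fin m)
    (hcol : ∀ a b : Fin k × Bool, a ≠ b →
      ((∃ v, v ∈ edge k a ∧ v ∈ edge k b) ∨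
        ∃ d, (∃ v, v ∈ edge k a ∧ v ∈ edge k d) ∧ ∃ w, w ∈ edge k b ∧ w ∈ edge k d) →
      (if a.2 then pend a.1 else cyc a.1) ≠ (if b.2 then pend b.1 else cyc b.1)) :
    strongChromaticIndex (Sgraph k) ≤ m := by
  obtain ⟨c, hc, -⟩ := exists_isStrongEdgeColoring_of_injective _ _ (edge_injective hk)
    edgeSet_subset_range_edge _ hcol
  exact strongChromaticIndex_le_of_isStrongEdgeColoring _ c hc

end Sgraph

theorem stmt19 :
    strongChromaticIndex (Sgraph 5) ≤ 5 ∧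
    strongChromaticIndex (Sgraph 6) ≤ 5 ∧
    strongChromaticIndex (Sgraph 8) ≤ 5 :=
  ⟨Sgraph.strongChromaticIndex_le (by norm_num) ![0, 1, 2, 3, 4] ![2, 3, 4, 0, 1] (by decide),
    Sgraph.strongChromaticIndex_le (by norm_num) ![0, 1, 2, 0, 1, 2] ![3, 4, 3, 4, 3, 4]
      (by decide),
    Sgraph.strongChromaticIndex_le (by norm_num) ![0, 1, 2, 0, 3, 2, 1, 3]
      ![2, 4, 3, 4, 1, 4, 0, 4] (by decide)⟩
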